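/- arXiv:2504.07588 — 5 statements merged into one kernel-verified Lean document; each statement's English description precedes it below -/
import Mathlib

section
/- In a vector lattice X with x₀ ∈ X, if x₁ ∼_{x₀} y₁ and x₂ ∼_{x₀} y₂, then x₁ + x₂ ∼_{x₀} y₁ + y₂ and x₁ − x₂ ∼_{x₀} y₁ − y₂. -/
def VLperp {X : Type*} [Lattice X] [AddCommGroup X] (u v : X) : Prop :=
  abs (abs u - abs v) = abs u + abs v

def VLsim {X : Type*} [Lattice X] [AddCommGroup X] (x₀ x y : X) : Prop :=
  VLperp (x - y) x₀

section Aux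
variable {X : Type*} [Lattice X] [AddCommGroup X] [CovariantClass X X (· + ·) (· ≤ ·)]

lemma VLperp_iff_inf_eq_zero (u v : X) : VLperp u v ↔ |u| ⊓ |v| = 0 := by
  unfold VLperp
  rw [← sup_sub_inf_eq_abs_sub (|v|) (|u|), ← inf_add_sup (|u|) (|v|),
    inf_comm (|v|) (|u|), sup_comm (|v|) (|u|)]
  constructor
  · intro h
    have h3 : |u| ⊓ |v| + (|u| ⊓ |v|) =
        (|u| ⊓ |v| + (|u| ⊔ |v|)) - ((|u| ⊔ |v|) - |u| ⊓ |v|) := by abel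
    rw [← h, sub_self] at h3
    have hnn : (0 : X) ≤ |u| ⊓ |v| := le_inf (abs_nonneg _) (abs_nonneg _)
    have hle : |u| ⊓ |v| ≤ 0 := by
      have := neg_eq_of_add_eq_zero_right h3
      rw [← this]
      have h4 := add_le_add_left hnn (-(|u| ⊓ |v|))
      simpa using h4
    exact le_antisymm hle hnn
  · intro h
    rw [h, zero_add, sub_zero]

lemma inf_zero_add {a b c : X} (ha : 0 ≤ a) (hb : 0 ≤ b) (hc : 0 ≤ c)
    (h1 : a ⊓ c = 0) (h2 : b ⊓ c = 0) : (a + b) ⊓ c = 0 := by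
  refine le_antisymm ?_ (le_inf (add_nonneg ha hb) hc)
  have key : (a + b) ⊓ c ≤ a ⊓ c + b ⊓ c := by
    have hrw : a ⊓ c + b ⊓ c = ((a + b) ⊓ (c + b)) ⊓ ((a + c) ⊓ (c + c)) := by
      rw [add_inf, inf_add, inf_add]
    rw [hrw]
    refine le_inf (le_inf inf_le_left ?_) (le_inf ?_ ?_)
    · exact inf_le_right.trans (le_add_of_nonneg_right hb)
    · exact inf_le_right.trans (le_add_of_nonneg_left ha)
    · exact inf_le_right.trans (le_add_of_nonneg_left hc)
  calc (a + b) ⊓ c ≤ a ⊓ c + b ⊓ c := key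
    _ = 0 := by rw [h1, h2, add_zero]

end Aux

theorem strong_relation_additive {X : Type*} [Lattice X] [AddCommGroup X]
    [CovariantClass X X (· + ·) (· ≤ ·)] [Module ℝ X] [PosSMulMono ℝ X]
    (x₀ x₁ x₂ y₁ y₂ : X) (h1 : VLsim x₀ x₁ y₁) (h2 : VLsim x₀ x₂ y₂) :
    VLsim x₀ (x₁ + x₂) (y₁ + y₂) ∧ VLsim x₀ (x₁ - x₂) (y₁ - y₂) := by
  rw [VLsim, VLperp_iff_inf_eq_zero] at h1 h2
  have hs : (|x₁ - y₁| + |x₂ - y₂|) ⊓ |x₀| = 0 :=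
    inf_zero_add (abs_nonneg _) (abs_nonneg _) (abs_nonneg _) h1 h2
  have main : ∀ d : X, |d| ≤ |x₁ - y₁| + |x₂ - y₂| → |d| ⊓ |x₀| = 0 := by
    intro d hd
    refine le_antisymm ?_ (le_inf (abs_nonneg _) (abs_nonneg _))
    calc |d| ⊓ |x₀| ≤ (|x₁ - y₁| + |x₂ - y₂|) ⊓ |x₀| := inf_le_inf_right _ hd
      _ = 0 := hs
  constructor
  · rw [VLsim, VLperp_iff_inf_eq_zero]
    refine main _ ?_
    have : x₁ + x₂ - (y₁ + y₂) = (x₁ - y₁) + (x₂ - y₂) := by abel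
    rw [this]; exact abs_add_le _ _
  · rw [VLsim, VLperp_iff_inf_eq_zero]
    refine main _ ?_
    have : x₁ - x₂ - (y₁ - y₂) = (x₁ - y₁) - (x₂ - y₂) := by abel
    rw [this]; rw [sub_eq_add_neg]
    exact (abs_add_le _ _).trans_eq (by rw [abs_neg])
end

section
/- In a vector lattice X with x₀ ∈ X, if |x| ∼_{x₀} |y| then |x + y| ∧ |x − y| ∼_{x₀} 0. -/
private lemma abs_add_inf_abs_sub {X : Type*} [Lattice X] [AddCommGroup X]
    [CovariantClass X X (· + ·) (· ≤ ·)] (x y : X) :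
    |x + y| ⊓ |x - y| = |(|x| - |y|)| := by
  letI : DistribLattice X := AddCommGroup.toDistribLattice X
  have habs : ∀ a : X, |a| = a ⊔ -a := fun a => rfl
  have hinf : ∀ a : X, a ⊓ -a = -|a| := fun a => by
    rw [habs, neg_sup, neg_neg, inf_comm]
  have h1 : (x + y) ⊓ (x - y) = x - |y| := by
    rw [sub_eq_add_neg x y, ← add_inf, hinf, ← sub_eq_add_neg]
  have h2 : (x + y) ⊓ -(x - y) = y - |x| := by
    rw [neg_sub, add_comm x y, sub_eq_add_neg y x, ← add_inf, hinf, ← sub_eq_add_neg]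
  have h3 : -(x + y) ⊓ (x - y) = -y - |x| := by
    rw [show -(x + y) = -y + -x from by abel, show x - y = -y + x from by abel,
      ← add_inf, inf_comm (-x) x, hinf, ← sub_eq_add_neg]
  have h4 : -(x + y) ⊓ -(x - y) = -x - |y| := by
    rw [show -(x + y) = -x + -y from by abel, show -(x - y) = -x + y from by abel,
      ← add_inf, inf_comm (-y) y, hinf, ← sub_eq_add_neg]
  have e1 : (x - |y|) ⊔ (-x - |y|) = |x| - |y| := by
    rw [sub_eq_add_neg x, sub_eq_add_neg (-x), add_comm x, add_comm (-x), ← add_sup,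
      ← habs x, add_comm, ← sub_eq_add_neg]
  have e2 : (y - |x|) ⊔ (-y - |x|) = -(|x| - |y|) := by
    rw [sub_eq_add_neg y, sub_eq_add_neg (-y), add_comm y, add_comm (-y), ← add_sup,
      ← habs y, neg_sub, sub_eq_add_neg, add_comm]
  have key : |x + y| ⊓ |x - y|
      = ((x - |y|) ⊔ (-x - |y|)) ⊔ ((y - |x|) ⊔ (-y - |x|)) := by
    rw [habs (x + y), habs (x - y), inf_sup_left, inf_sup_right, inf_sup_right,
      h1, h2, h3, h4]
    ac_rfl
  rw [key, e1, e2]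
  exact (habs _).symm

theorem strong_relation_abs_inf {X : Type*} [Lattice X] [AddCommGroup X]
    [CovariantClass X X (· + ·) (· ≤ ·)] [Module ℝ X] [PosSMulMono ℝ X]
    (x₀ x y : X) (h : VLsim x₀ (abs x) (abs y)) :
    VLsim x₀ (abs (x + y) ⊓ abs (x - y)) 0 := by
  unfold VLsim VLperp at h ⊢
  rw [sub_zero, abs_add_inf_abs_sub, abs_abs]
  exact h
end

section
/- In a vector lattice X with x₀ ∈ X, if |x| ∼_{x₀} −|y| then |x + y| ∨ |x − y| ∼_{x₀} 0, and consequently x ∼_{x₀} y and x ∼_{x₀} −y. -/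
private lemma VLperp_iff_inf {X : Type*} [Lattice X] [AddCommGroup X]
    [CovariantClass X X (· + ·) (· ≤ ·)] (u v : X) :
    VLperp u v ↔ |u| ⊓ |v| = 0 := by
  unfold VLperp
  have habs : |(|u| - |v|)| = |u| ⊔ |v| - |u| ⊓ |v| := by
    rw [← sup_sub_inf_eq_abs_sub, sup_comm, inf_comm]
  have hadd : |u| + |v| = |u| ⊓ |v| + (|u| ⊔ |v|) := (inf_add_sup _ _).symm
  rw [habs, hadd]
  constructor
  · intro hEq
    have hneg : -(|u| ⊓ |v|) = |u| ⊓ |v| := by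
      have h2 : (|u| ⊔ |v|) + -(|u| ⊓ |v|) = (|u| ⊔ |v|) + |u| ⊓ |v| := by
        rw [← sub_eq_add_neg, hEq, add_comm]
      exact add_left_cancel h2
    have hc0 : 0 ≤ |u| ⊓ |v| := le_inf (abs_nonneg u) (abs_nonneg v)
    have hc0' : |u| ⊓ |v| ≤ 0 := by
      rw [← hneg] at hc0
      exact neg_nonneg.mp hc0
    exact le_antisymm hc0' hc0
  · intro h0
    rw [h0]
    abel

private lemma abs_sup_abs_eq {X : Type*} [Lattice X] [AddCommGroup X]
    [CovariantClass X X (· + ·) (· ≤ ·)] (x y : X) :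
    |x + y| ⊔ |x - y| = |x| + |y| := by
  have h1 : (x + y) ⊔ (x - y) = x + |y| := by
    rw [sub_eq_add_neg, ← add_sup, abs]
  have h2 : (-(x + y)) ⊔ (-(x - y)) = -x + |y| := by
    have : -(x + y) = -x + -y := by abel
    have h' : -(x - y) = -x + y := by abel
    rw [this, h', ← add_sup, sup_comm, abs]
  calc |x + y| ⊔ |x - y|
      = ((x + y) ⊔ (-(x + y))) ⊔ ((x - y) ⊔ (-(x - y))) := by
        rw [abs, abs]
    _ = ((x + y) ⊔ (x - y)) ⊔ ((-(x + y)) ⊔ (-(x - y))) := sup_sup_sup_comm _ _ _ _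
    _ = (x + |y|) ⊔ (-x + |y|) := by rw [h1, h2]
    _ = (x ⊔ -x) + |y| := by rw [sup_add]
    _ = |x| + |y| := rfl

theorem strong_relation_abs_sup {X : Type*} [Lattice X] [AddCommGroup X]
    [CovariantClass X X (· + ·) (· ≤ ·)] [Module ℝ X] [PosSMulMono ℝ X]
    (x₀ x y : X) (h : VLsim x₀ (abs x) (-(abs y))) :
    VLsim x₀ (abs (x + y) ⊔ abs (x - y)) 0 ∧ VLsim x₀ x y ∧ VLsim x₀ x (-y) := by
  have hnn : (0 : X) ≤ |x| + |y| := add_nonneg (abs_nonneg x) (abs_nonneg y)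
  have h' : (|x| + |y|) ⊓ |x₀| = 0 := by
    have := (VLperp_iff_inf (|x| - -(|y|)) x₀).mp h
    rwa [sub_neg_eq_add, abs_of_nonneg hnn] at this
  have key : ∀ z : X, |z| ≤ |x| + |y| → VLperp z x₀ := by
    intro z hz
    rw [VLperp_iff_inf]
    refine le_antisymm ?_ (le_inf (abs_nonneg _) (abs_nonneg _))
    calc |z| ⊓ |x₀| ≤ (|x| + |y|) ⊓ |x₀| := inf_le_inf_right _ hz
      _ = 0 := h'
  refine ⟨?_, ?_, ?_⟩
  · unfold VLsim
    rw [sub_zero]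
    apply key
    rw [abs_of_nonneg (le_trans (abs_nonneg (x + y)) le_sup_left),
      abs_sup_abs_eq]
  · refine key (x - y) ?_
    calc |x - y| = |x + -y| := by rw [sub_eq_add_neg]
      _ ≤ |x| + |(-y)| := abs_add_le x (-y)
      _ = |x| + |y| := by rw [abs_neg]
  · refine key (x - -y) ?_
    rw [sub_neg_eq_add]
    exact abs_add_le x y
end

section
/- Let X be a real normed space, x₀ ∈ X \ {0}, x* ∈ X* with ‖x*‖ = ‖x₀‖ and x*(x₀) = ‖x₀‖², and let C = {x ∈ X : x*(x) ≥ ‖x₀‖·‖x‖}. If 0 ≤ x ≤ y in the order induced by C, then ‖x‖ ≤ ‖y‖. -/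
theorem norm_mono_of_cone_order {X : Type*} [NormedAddCommGroup X]
    [NormedSpace ℝ X] (x₀ : X) (hx₀ : x₀ ≠ 0) (xs : X →L[ℝ] ℝ)
    (hn : ‖xs‖ = ‖x₀‖) (hv : xs x₀ = ‖x₀‖ ^ 2) (x y : X)
    (hx : x ∈ {z : X | ‖x₀‖ * ‖z‖ ≤ xs z})
    (hyx : y - x ∈ {z : X | ‖x₀‖ * ‖z‖ ≤ xs z}) :
    ‖x‖ ≤ ‖y‖ := by
  have h0 : (0:ℝ) < ‖x₀‖ := norm_pos_iff.mpr hx₀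
  have h1 : ‖x₀‖ * ‖x‖ ≤ xs x := hx
  have h2 : ‖x₀‖ * ‖y - x‖ ≤ xs (y - x) := hyx
  have h3 : xs y ≤ ‖x₀‖ * ‖y‖ := by
    calc xs y ≤ ‖xs‖ * ‖y‖ := le_trans (le_abs_self _) (xs.le_opNorm y)
    _ = ‖x₀‖ * ‖y‖ := by rw [hn]
  have h4 : xs y = xs x + xs (y - x) := by
    rw [map_sub]; ring
  have h5 : ‖x₀‖ * ‖x‖ ≤ ‖x₀‖ * ‖y‖ := by
    have : (0:ℝ) ≤ ‖x₀‖ * ‖y - x‖ := by positivity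
    nlinarith
  exact le_of_mul_le_mul_left h5 h0
end

section
/- Let X be a real normed space, x₀ ∈ X \ {0}, and let x* be a bounded linear functional with x*(x₀) = ‖x₀‖². If f : [a,b] → X is such that x* ∘ f : [a,b] → ℝ has bounded variation, then there exist functions f₁, f₂ : [a,b] → X, each increasing with respect to the cone C = {x : x*(x) ≥ α‖x‖} (for fixed α ∈ (0,‖x₀‖]), such that x* ∘ f = x* ∘ (f₁ − f₂) on [a,b]; moreover f₁ and f₂ are of weakly bounded variation (y* ∘ fᵢ has bounded variation for every y* ∈ X*). -/
/-- A real function has bounded variation on `[a,b]`. -/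
def BVOn (g : ℝ → ℝ) (a b : ℝ) : Prop :=
  ∃ M : ℝ, ∀ (n : ℕ) (t : Fin (n + 1) → ℝ), Monotone t →
    (∀ i, t i ∈ Set.Icc a b) →
    ∑ i : Fin n, |g (t i.succ) - g (t i.castSucc)| ≤ M

/-- `g` is increasing on `[a,b]` with respect to the cone `C`. -/
def IncreasingWrt {X : Type*} [NormedAddCommGroup X] (C : Set X)
    (g : ℝ → X) (a b : ℝ) : Prop :=
  ∀ s ∈ Set.Icc a b, ∀ t ∈ Set.Icc a b, s ≤ t → g t - g s ∈ C

/-- `g` is of weakly bounded variation on `[a,b]`. -/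
def WBVOn {X : Type*} [NormedAddCommGroup X] [NormedSpace ℝ X]
    (g : ℝ → X) (a b : ℝ) : Prop :=
  ∀ ys : X →L[ℝ] ℝ, BVOn (fun t => ys (g t)) a b


/-! Jordan-decompose `xs ∘ f = p - q` with `p, q` monotone. Since `α ‖x₀‖ ≤ ‖x₀‖² = xs x₀`, the
ray through `x₀` lies in the cone, so for `w = (xs x₀)⁻¹ • x₀` the functions `p • w` and `q • w`
increase with respect to the cone and satisfy `xs (p t • w) = p t`; every functional maps them
to scalar multiples of monotone functions, hence to functions of bounded variation. -/

open Set

lemma sum_range_edist_eq_ofReal (g : ℝ → ℝ) (u : ℕ → ℝ) (n : ℕ) :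
    ∑ i ∈ Finset.range n, edist (g (u (i + 1))) (g (u i)) =
      ENNReal.ofReal (∑ i : Fin n, |g (u (i + 1)) - g (u i)|) := by
  rw [ENNReal.ofReal_sum_of_nonneg fun i _ => abs_nonneg _, Finset.sum_range]
  simp only [edist_dist, Real.dist_eq]

lemma bvOn_iff_boundedVariationOn {g : ℝ → ℝ} {a b : ℝ} :
    BVOn g a b ↔ BoundedVariationOn g (Icc a b) := by
  constructor
  · rintro ⟨M, hM⟩
    refine ne_top_of_le_ne_top (ENNReal.ofReal_ne_top (r := M)) (iSup_le ?_)
    rintro ⟨n, u, hu, hus⟩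
    rw [sum_range_edist_eq_ofReal]
    exact ENNReal.ofReal_le_ofReal
      (hM n (fun i => u i) (hu.comp fun _ _ h => h) fun i => hus i)
  · intro hg
    refine ⟨(eVariationOn g (Icc a b)).toReal, fun n t ht hts => ?_⟩
    have hclamp : ∀ i : Fin n, Fin.clamp i n = i.castSucc ∧ Fin.clamp (i + 1) n = i.succ :=
      fun i => ⟨Fin.ext (by simp [Fin.clamp]), Fin.ext (by simp [Fin.clamp])⟩
    have hsum := eVariationOn.sum_le (f := g) (n := n) (ht.comp Fin.clamp_monotone)
      fun i => hts (Fin.clamp i n)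
    rw [sum_range_edist_eq_ofReal, ← ENNReal.ofReal_toReal hg,
      ENNReal.ofReal_le_ofReal_iff ENNReal.toReal_nonneg] at hsum
    simpa only [Function.comp_apply, hclamp] using hsum

lemma MonotoneOn.boundedVariationOn_Icc {α : Type*} [LinearOrder α] {p : α → ℝ} {a b : α}
    (hp : MonotoneOn p (Icc a b)) : BoundedVariationOn p (Icc a b) :=
  hp.boundedVariationOn fun _ hx => abs_le_max_abs_abs
    (hp (left_mem_Icc.2 (hx.1.trans hx.2)) hx hx.1)
    (hp hx (right_mem_Icc.2 (hx.1.trans hx.2)) hx.2)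

section SmulConst

variable {X : Type*} [NormedAddCommGroup X] [NormedSpace ℝ X] {p : ℝ → ℝ} {a b : ℝ}

lemma increasingWrt_smul_const {C : Set X} {w : X} (hp : MonotoneOn p (Icc a b))
    (hC : ∀ c : ℝ, 0 ≤ c → c • w ∈ C) : IncreasingWrt C (fun t => p t • w) a b :=
  fun _ hs _ ht hst => by
    rw [← sub_smul]
    exact hC _ (sub_nonneg.2 (hp hs ht hst))

lemma wbvOn_smul_const (hp : BoundedVariationOn p (Icc a b)) (w : X) :
    WBVOn (fun t => p t • w) a b := by
  intro ys
  have hcomp : (fun t => ys (p t • w)) = (ys w • ·) ∘ p := by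
    ext t
    simp [mul_comm]
  rw [bvOn_iff_boundedVariationOn, hcomp]
  exact (lipschitzWith_smul (ys w)).comp_boundedVariationOn hp

lemma smul_mem_cone {xs : X →L[ℝ] ℝ} {α c : ℝ} {w : X} (hw : α * ‖w‖ ≤ xs w) (hc : 0 ≤ c) :
    c • w ∈ {x : X | α * ‖x‖ ≤ xs x} := by
  simp only [mem_ofPred_eq, norm_smul, map_smul, smul_eq_mul, Real.norm_of_nonneg hc]
  rw [mul_left_comm]
  exact mul_le_mul_of_nonneg_left hw hc

end SmulConst

theorem jordan_decomposition_wbv_general {X : Type*} [NormedAddCommGroup X]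
    [NormedSpace ℝ X] (a b : ℝ) (x₀ : X) (hx₀ : x₀ ≠ 0) (xs : X →L[ℝ] ℝ)
    (hv : xs x₀ = ‖x₀‖ ^ 2) (α : ℝ) (hα' : α ≤ ‖x₀‖)
    (f : ℝ → X) (hf : BVOn (fun t => xs (f t)) a b) :
    ∃ f₁ f₂ : ℝ → X,
      IncreasingWrt {x : X | α * ‖x‖ ≤ xs x} f₁ a b ∧
      IncreasingWrt {x : X | α * ‖x‖ ≤ xs x} f₂ a b ∧
      (∀ t ∈ Set.Icc a b, xs (f t) = xs (f₁ t) - xs (f₂ t)) ∧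
      WBVOn f₁ a b ∧ WBVOn f₂ a b := by
  obtain ⟨p, q, hp, hq, hpq⟩ := (bvOn_iff_boundedVariationOn.1 hf).locallyBoundedVariationOn
    |>.exists_monotoneOn_sub_monotoneOn
  have hx₀_mem : α * ‖x₀‖ ≤ xs x₀ := by
    rw [hv, sq]
    exact mul_le_mul_of_nonneg_right hα' (norm_nonneg _)
  have hxs_pos : 0 < xs x₀ := by
    rw [hv]
    exact pow_pos (norm_pos_iff.2 hx₀) 2
  set w := (xs x₀)⁻¹ • x₀
  have hw : xs w = 1 := by simp [w, hxs_pos.ne']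
  have hw_ray : ∀ c : ℝ, 0 ≤ c → c • w ∈ {x : X | α * ‖x‖ ≤ xs x} :=
    fun _ => smul_mem_cone (smul_mem_cone hx₀_mem (inv_nonneg.2 hxs_pos.le))
  refine ⟨fun t => p t • w, fun t => q t • w, increasingWrt_smul_const hp hw_ray,
    increasingWrt_smul_const hq hw_ray, fun t _ => ?_,
    wbvOn_smul_const hp.boundedVariationOn_Icc w, wbvOn_smul_const hq.boundedVariationOn_Icc w⟩
  simp [hw, congrFun hpq t]

theorem jordan_decomposition_wbv {X : Type*} [NormedAddCommGroup X]
    [NormedSpace ℝ X] (a b : ℝ) (x₀ : X) (hx₀ : x₀ ≠ 0) (xs : X →L[ℝ] ℝ)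
    (hv : xs x₀ = ‖x₀‖ ^ 2) (α : ℝ) (hα : 0 < α) (hα' : α ≤ ‖x₀‖)
    (f : ℝ → X) (hf : BVOn (fun t => xs (f t)) a b) :
    ∃ f₁ f₂ : ℝ → X,
      IncreasingWrt {x : X | α * ‖x‖ ≤ xs x} f₁ a b ∧
      IncreasingWrt {x : X | α * ‖x‖ ≤ xs x} f₂ a b ∧
      (∀ t ∈ Set.Icc a b, xs (f t) = xs (f₁ t) - xs (f₂ t)) ∧
      WBVOn f₁ a b ∧ WBVOn f₂ a b :=
  jordan_decomposition_wbv_general a b x₀ hx₀ xs hv α hα' f hf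
end
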